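/- Let {X_n}_{n∈ℤ} be a d-dimensional stationary process in a complex Hilbert space H with spectral density matrix S : 𝕋 → ℂ^{d×d}, i.e., S has Lebesgue-integrable entries and [X_{n+m}, X_n^T] = (1/2π) ∫₀^{2π} e^{−imθ} S(e^{iθ}) dθ entrywise for all n, m ∈ ℤ. Suppose S admits a spectral factorization S(t) = S_+(t) S_+(t)^* a.e. on 𝕋, where every entry of S_+ belongs to H² and for every row vector g = (g_1, …, g_d) with each g_k ∈ H², the infimum over row vectors of polynomials Q of ‖g − Q S_+‖_{(L²(𝕋))^{1×d}} is 0. Then for every L ≥ 1, (e_X^{L})² = ∑_{j=1}^{d} ∑_{k=1}^{d} ∑_{n=0}^{L−1} |c_n{S_+^{(jk)}}|². -/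

import Mathlib

open MeasureTheory Matrix

/-- The `n`-th Fourier coefficient of a function on the unit circle:
`c_n{f} = (1/2π) ∫₀^{2π} f(e^{iθ}) e^{−inθ} dθ`. -/
noncomputable def fourierCoef (f : ℂ → ℂ) (n : ℤ) : ℂ :=
  (1 / (2 * Real.pi) : ℂ) * ∫ θ in (0:ℝ)..(2 * Real.pi),
    f (Complex.exp (θ * Complex.I)) * Complex.exp (-(n : ℂ) * θ * Complex.I)

/-- `f ∈ L²(𝕋)`. -/
def MemL2Circle (f : ℂ → ℂ) : Prop :=
  MeasureTheory.MemLp (fun θ : ℝ => f (Complex.exp (θ * Complex.I))) 2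
    (MeasureTheory.volume.restrict (Set.Ioc 0 (2 * Real.pi)))

/-- `f ∈ H²`: `f ∈ L²(𝕋)` with vanishing negative Fourier coefficients. -/
def MemH2 (f : ℂ → ℂ) : Prop :=
  MemL2Circle f ∧ ∀ n : ℤ, n < 0 → fourierCoef f n = 0

/-- The squared `L²(𝕋)` norm: `‖f‖² = (1/2π) ∫₀^{2π} |f(e^{iθ})|² dθ`. -/
noncomputable def l2NormSqCircle (f : ℂ → ℂ) : ℝ :=
  (1 / (2 * Real.pi)) * ∫ θ in (0:ℝ)..(2 * Real.pi),
    ‖f (Complex.exp (θ * Complex.I))‖ ^ 2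

/-!
The map `X_m^{(l)} ↦ (e^{-imθ} S₊^{(lr)}(e^{iθ}))_r` is isometric from the span of the process
into `(L²(𝕋))^d`: both families have the Gram matrix `(1/2π) ∫ e^{i(p-q)θ} S dθ`, because
`S = S₊ S₊*`. It sends row `j` of the prediction error to the row whose `k`-th entry is
`e^{-iLθ} S₊^{(jk)} - (Q_j S₊)_k`, where `Q_j` are the polynomials with the coefficients of the
`A_n`. Splitting off the Fourier modes `0, …, L-1` of `S₊^{(jk)}` writes this entry as
`∑_{n<L} c_n{S₊^{(jk)}} e^{i(n-L)θ} + (g_{jk} - (Q_j S₊)_k)` with `g_{jk} ∈ H²`. The two summands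
live on negative and on nonnegative frequencies, so they are orthogonal: the squared error is
`∑ |c_n|²` plus `∑_j ‖g_j - Q_j S₊‖²`, and by density the second sum can be made arbitrarily small.
-/

open Complex Real

noncomputable section

section InnerProduct

variable {𝕜 E F : Type*} [RCLike 𝕜] [NormedAddCommGroup E] [InnerProductSpace 𝕜 E]
  [NormedAddCommGroup F] [InnerProductSpace 𝕜 F]

theorem norm_sum_smul_sq_eq_re_sum {ι : Type*} (s : Finset ι) (c : ι → 𝕜) (x : ι → E) :
    ‖∑ i ∈ s, c i • x i‖ ^ 2 =
      RCLike.re (∑ i ∈ s, ∑ j ∈ s, (starRingEnd 𝕜) (c i) * c j * inner 𝕜 (x i) (x j)) := by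
  rw [← inner_self_eq_norm_sq (𝕜 := 𝕜), sum_inner]
  simp_rw [inner_smul_left, inner_sum, inner_smul_right, Finset.mul_sum, mul_assoc]

theorem norm_sum_smul_sq_eq_sum_of_inner_eq {ι κ β : Type*} [Fintype κ] {x : ι → E}
    {y : κ → ι → F} (h : ∀ i j, inner 𝕜 (x i) (x j) = ∑ r, inner 𝕜 (y r i) (y r j))
    (s : Finset β) (φ : β → ι) (c : β → 𝕜) :
    ‖∑ b ∈ s, c b • x (φ b)‖ ^ 2 = ∑ r, ‖∑ b ∈ s, c b • y r (φ b)‖ ^ 2 := by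
  simp only [norm_sum_smul_sq_eq_re_sum s c, h, Finset.mul_sum, ← map_sum]
  exact congrArg _ ((Finset.sum_congr rfl fun i _ => Finset.sum_comm).trans Finset.sum_comm)

theorem norm_sub_sum_smul_sq_eq_sum_of_inner_eq {ι κ β : Type*} [Fintype κ] {x : ι → E}
    {y : κ → ι → F} (h : ∀ i j, inner 𝕜 (x i) (x j) = ∑ r, inner 𝕜 (y r i) (y r j)) (a : ι)
    (s : Finset β) (φ : β → ι) (c : β → 𝕜) :
    ‖x a - ∑ b ∈ s, c b • x (φ b)‖ ^ 2 = ∑ r, ‖y r a - ∑ b ∈ s, c b • y r (φ b)‖ ^ 2 := by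
  have key := norm_sum_smul_sq_eq_sum_of_inner_eq h s.insertNone (Option.elim · a φ)
    (Option.elim · 1 (- c ·))
  simpa [Finset.sum_insertNone, neg_smul, ← sub_eq_add_neg] using key

theorem Orthonormal.norm_add_sum_smul_sq {ι : Type*} {v : ι → E} (hv : Orthonormal 𝕜 v) {w : E}
    (s : Finset ι) (c : ι → 𝕜) (hw : ∀ i ∈ s, inner 𝕜 (v i) w = 0) :
    ‖w + ∑ i ∈ s, c i • v i‖ ^ 2 = ‖w‖ ^ 2 + ∑ i ∈ s, ‖c i‖ ^ 2 := by
  have horth : inner 𝕜 w (∑ i ∈ s, c i • v i) = 0 := by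
    rw [inner_sum]
    refine Finset.sum_eq_zero fun i hi => ?_
    rw [inner_smul_right, ← inner_conj_symm, hw i hi, map_zero, mul_zero]
  rw [@norm_add_sq 𝕜, horth, map_zero, mul_zero, add_zero, add_right_inj,
    ← inner_self_eq_norm_sq (𝕜 := 𝕜), hv.inner_sum, map_sum]
  simp_rw [RCLike.conj_mul, ← RCLike.ofReal_pow, RCLike.ofReal_re]

end InnerProduct

section Lp

variable {α E : Type*} [MeasurableSpace α] {μ : Measure α} [NormedAddCommGroup E]

theorem MeasureTheory.MemLp.toLp_finsetSum {p : ENNReal} [Fact (1 ≤ p)] {ι : Type*}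
    (s : Finset ι) {f : ι → α → E} (hf : ∀ i, MemLp (f i) p μ) :
    (memLp_finsetSum s fun i _ => hf i).toLp (fun a => ∑ i ∈ s, f i a) =
      ∑ i ∈ s, (hf i).toLp (f i) := by
  classical
  induction s using Finset.induction_on with
  | empty => simp only [Finset.sum_empty]; rfl
  | insert i s hi ih =>
    simp only [Finset.sum_insert hi, ← ih, ← MemLp.toLp_add]
    rfl

theorem MeasureTheory.MemLp.inner_toLp_eq_integral {u v : α → ℂ} (hu : MemLp u 2 μ)
    (hv : MemLp v 2 μ) :
    inner ℂ (hu.toLp u) (hv.toLp v) = ∫ a, (starRingEnd ℂ) (u a) * v a ∂μ := by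
  rw [L2.inner_def]
  refine integral_congr_ae ?_
  filter_upwards [hu.coeFn_toLp, hv.coeFn_toLp] with a hua hva
  rw [hua, hva, RCLike.inner_apply, mul_comm]

theorem MeasureTheory.MemLp.norm_toLp_sq {u : α → ℂ} (hu : MemLp u 2 μ) :
    ‖hu.toLp u‖ ^ 2 = ∫ a, ‖u a‖ ^ 2 ∂μ := by
  have h := inner_self_eq_norm_sq_to_K (𝕜 := ℂ) (hu.toLp u)
  simp_rw [hu.inner_toLp_eq_integral, conj_mul'] at h
  norm_cast at h
  exact Complex.ofReal_injective h.symm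

theorem MeasureTheory.MemLp.toLp_add_sum_smul {β : Type*} {f : α → ℂ} {g : β → α → ℂ}
    (hf : MemLp f 2 μ) (hg : ∀ b, MemLp (g b) 2 μ) (s : Finset β) (c : β → ℂ) :
    hf.toLp f + ∑ b ∈ s, c b • (hg b).toLp (g b) =
      (hf.add (memLp_finsetSum s fun b _ => (hg b).const_mul (c b))).toLp
        (fun a => f a + ∑ b ∈ s, c b * g b a) := by
  have hcg : ∀ b, MemLp (fun a => c b * g b a) 2 μ := fun b => (hg b).const_mul (c b)
  have hsum := MemLp.toLp_finsetSum s hcg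
  have hsmul : ∀ b, (hcg b).toLp _ = c b • (hg b).toLp (g b) := fun b =>
    MemLp.toLp_const_smul (c b) (hg b)
  simp only [hsmul] at hsum
  rw [← hsum, ← MemLp.toLp_add]
  rfl

theorem norm_sub_sum_smul_sq_eq_sum_integral {H ι κ β : Type*} [NormedAddCommGroup H]
    [InnerProductSpace ℂ H] [Fintype κ] {x : ι → H} {f : κ → ι → α → ℂ}
    (hf : ∀ r i, MemLp (f r i) 2 μ)
    (h : ∀ i j, inner ℂ (x i) (x j) = ∑ r, ∫ t, (starRingEnd ℂ) (f r i t) * f r j t ∂μ)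
    (a : ι) (s : Finset β) (φ : β → ι) (c : β → ℂ) :
    ‖x a - ∑ b ∈ s, c b • x (φ b)‖ ^ 2 =
      ∑ r, ∫ t, ‖f r a t - ∑ b ∈ s, c b * f r (φ b) t‖ ^ 2 ∂μ := by
  have hy : ∀ i j, inner ℂ (x i) (x j) =
      ∑ r, inner ℂ ((hf r i).toLp (f r i)) ((hf r j).toLp (f r j)) := by
    simpa only [MemLp.inner_toLp_eq_integral] using h
  rw [norm_sub_sum_smul_sq_eq_sum_of_inner_eq hy]
  refine Finset.sum_congr rfl fun r _ => ?_
  have key := MemLp.toLp_add_sum_smul (hf r a) (fun b => hf r (φ b)) s (fun b => - c b)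
  simp only [neg_smul, Finset.sum_neg_distrib, ← sub_eq_add_neg, neg_mul] at key
  rw [key, MemLp.norm_toLp_sq]

end Lp

-- Functions on `𝕋` are handled as `θ ↦ f (e^{iθ})` (`onCircle`), against the normalised
-- Lebesgue measure on `(0, 2π]`.
def circleMeasure : Measure ℝ :=
  (ENNReal.ofReal (2 * π))⁻¹ • volume.restrict (Set.Ioc 0 (2 * π))

theorem smul_circleMeasure :
    ENNReal.ofReal (2 * π) • circleMeasure = volume.restrict (Set.Ioc 0 (2 * π)) := by
  rw [circleMeasure, smul_smul, ENNReal.mul_inv_cancel (by simp [pi_pos]) ENNReal.ofReal_ne_top,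
    one_smul]

instance : IsProbabilityMeasure circleMeasure := by
  constructor
  rw [circleMeasure, Measure.smul_apply, Measure.restrict_apply_univ, Real.volume_Ioc, sub_zero,
    smul_eq_mul, ENNReal.inv_mul_cancel (by simp [pi_pos]) ENNReal.ofReal_ne_top]

theorem integral_circleMeasure {E : Type*} [NormedAddCommGroup E] [NormedSpace ℝ E]
    (f : ℝ → E) :
    ∫ θ, f θ ∂circleMeasure = (2 * π)⁻¹ • ∫ θ in (0 : ℝ)..2 * π, f θ := by
  rw [circleMeasure, integral_smul_measure, intervalIntegral.integral_of_le two_pi_pos.le,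
    ENNReal.toReal_inv, ENNReal.toReal_ofReal two_pi_pos.le]

theorem memLp_circleMeasure_iff {E : Type*} [NormedAddCommGroup E] {f : ℝ → E}
    {p : ENNReal} :
    MemLp f p circleMeasure ↔ MemLp f p (volume.restrict (Set.Ioc 0 (2 * π))) := by
  refine ⟨fun h => smul_circleMeasure ▸ h.smul_measure ENNReal.ofReal_ne_top,
    fun h => h.smul_measure ?_⟩
  simp [pi_pos]

def expI (m : ℤ) (θ : ℝ) : ℂ := cexp (m * θ * I)

def onCircle (f : ℂ → ℂ) (θ : ℝ) : ℂ := f (cexp (θ * I))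

theorem norm_expI (m : ℤ) (θ : ℝ) : ‖expI m θ‖ = 1 := by
  rw [expI, show (m : ℂ) * θ * I = ((m * θ : ℝ) : ℂ) * I by push_cast; ring]
  exact norm_exp_ofReal_mul_I _

theorem continuous_expI (m : ℤ) : Continuous (expI m) := by
  unfold expI; fun_prop

theorem expI_add (m n : ℤ) (θ : ℝ) : expI (m + n) θ = expI m θ * expI n θ := by
  rw [expI, expI, expI, ← Complex.exp_add]; push_cast; ring_nf

theorem expI_neg (m : ℤ) (θ : ℝ) : expI (-m) θ = (expI m θ)⁻¹ :=
  eq_inv_of_mul_eq_one_left (by rw [← expI_add, neg_add_cancel]; simp [expI])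

theorem conj_expI (m : ℤ) (θ : ℝ) : (starRingEnd ℂ) (expI m θ) = expI (-m) θ := by
  rw [expI, expI, ← Complex.exp_conj]; simp

theorem cexp_mul_I_zpow (θ : ℝ) (m : ℤ) : cexp (θ * I) ^ m = expI m θ := by
  rw [← Complex.exp_int_mul, expI]; ring_nf

theorem integral_expI (m : ℤ) : ∫ θ, expI m θ ∂circleMeasure = if m = 0 then 1 else 0 := by
  rw [integral_circleMeasure]
  split_ifs with hm
  · have : (π : ℂ) ≠ 0 := ofReal_ne_zero.mpr pi_ne_zero
    simp [hm, expI]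
    field_simp
  · have hmI : (m : ℂ) * I ≠ 0 := by simp [hm]
    have hper : cexp (m * I * (2 * π : ℝ)) = 1 := by
      rw [← Complex.exp_int_mul_two_pi_mul_I m]; push_cast; ring_nf
    simp_rw [expI, show ∀ θ : ℝ, (m : ℂ) * θ * I = m * I * θ from fun θ => by ring]
    rw [integral_exp_mul_complex hmI, hper]
    simp

theorem memLp_expI {ν : Measure ℝ} [IsFiniteMeasure ν] (p : ENNReal) (m : ℤ) :
    MemLp (expI m) p ν :=
  .of_bound (continuous_expI m).aestronglyMeasurable 1 (.of_forall fun θ => (norm_expI m θ).le)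

theorem MeasureTheory.MemLp.expI_mul {ν : Measure ℝ} {p : ENNReal} {u : ℝ → ℂ}
    (hu : MemLp u p ν) (m : ℤ) :
    MemLp (fun θ => expI m θ * u θ) p ν :=
  hu.of_le ((continuous_expI m).aestronglyMeasurable.mul hu.1)
    (.of_forall fun θ => by rw [norm_mul, norm_expI, one_mul])

def circleCoeff (u : ℝ → ℂ) (m : ℤ) : ℂ := ∫ θ, expI (-m) θ * u θ ∂circleMeasure

theorem fourierCoef_eq_circleCoeff (f : ℂ → ℂ) (m : ℤ) :
    fourierCoef f m = circleCoeff (onCircle f) m := by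
  rw [fourierCoef, circleCoeff, integral_circleMeasure, Complex.real_smul]
  congr 1
  · push_cast; ring
  · refine intervalIntegral.integral_congr fun θ _ => ?_
    simp only [expI, onCircle]; push_cast; ring_nf

theorem l2NormSqCircle_eq_integral (f : ℂ → ℂ) :
    l2NormSqCircle f = ∫ θ, ‖onCircle f θ‖ ^ 2 ∂circleMeasure := by
  rw [l2NormSqCircle, integral_circleMeasure, smul_eq_mul, one_div]
  rfl

theorem l2NormSqCircle_nonneg (f : ℂ → ℂ) : 0 ≤ l2NormSqCircle f := by
  rw [l2NormSqCircle_eq_integral]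
  exact integral_nonneg fun θ => by positivity

theorem circleCoeff_expI_mul (u : ℝ → ℂ) (n m : ℤ) :
    circleCoeff (fun θ => expI n θ * u θ) m = circleCoeff u (m - n) := by
  simp_rw [circleCoeff, ← mul_assoc, ← expI_add]
  ring_nf

def expIL2 (m : ℤ) : Lp ℂ 2 circleMeasure := (memLp_expI 2 m).toLp (expI m)

theorem inner_expIL2_toLp {u : ℝ → ℂ} (hu : MemLp u 2 circleMeasure) (m : ℤ) :
    inner ℂ (expIL2 m) (hu.toLp u) = circleCoeff u m := by
  simp_rw [expIL2, MemLp.inner_toLp_eq_integral, conj_expI, circleCoeff]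

theorem circleCoeff_expI (n m : ℤ) : circleCoeff (expI n) m = if m = n then 1 else 0 := by
  simp_rw [circleCoeff, ← expI_add, integral_expI, neg_add_eq_zero]

theorem orthonormal_expIL2 : Orthonormal ℂ expIL2 := by
  rw [orthonormal_iff_ite]
  intro m n
  rw [← circleCoeff_expI, ← inner_expIL2_toLp]
  rfl

theorem circleCoeff_sub {u v : ℝ → ℂ} (hu : MemLp u 2 circleMeasure)
    (hv : MemLp v 2 circleMeasure) (m : ℤ) :
    circleCoeff (fun θ => u θ - v θ) m = circleCoeff u m - circleCoeff v m := by
  rw [← inner_expIL2_toLp hu, ← inner_expIL2_toLp hv, ← inner_sub_right, ← MemLp.toLp_sub,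
    inner_expIL2_toLp]
  rfl

theorem circleCoeff_finsetSum {ι : Type*} (s : Finset ι) {u : ι → ℝ → ℂ}
    (hu : ∀ i, MemLp (u i) 2 circleMeasure) (m : ℤ) :
    circleCoeff (fun θ => ∑ i ∈ s, u i θ) m = ∑ i ∈ s, circleCoeff (u i) m := by
  simp_rw [← inner_expIL2_toLp (hu _), ← inner_sum, ← MemLp.toLp_finsetSum, inner_expIL2_toLp]

theorem circleCoeff_const_mul (u : ℝ → ℂ) (c : ℂ) (m : ℤ) :
    circleCoeff (fun θ => c * u θ) m = c * circleCoeff u m := by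
  simp_rw [circleCoeff, mul_left_comm _ c, integral_const_mul]

theorem integral_norm_add_sum_mul_expI_sq {β : Type*} {R : ℝ → ℂ}
    (hR : MemLp R 2 circleMeasure) (s : Finset β) {k : β → ℤ} (hk : Function.Injective k)
    (c : β → ℂ) (horth : ∀ b ∈ s, circleCoeff R (k b) = 0) :
    ∫ θ, ‖R θ + ∑ b ∈ s, c b * expI (k b) θ‖ ^ 2 ∂circleMeasure =
      ∫ θ, ‖R θ‖ ^ 2 ∂circleMeasure + ∑ b ∈ s, ‖c b‖ ^ 2 := by
  have key := hR.toLp_add_sum_smul (fun b => memLp_expI 2 (k b)) s c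
  calc _ = ‖hR.toLp R + ∑ b ∈ s, c b • expIL2 (k b)‖ ^ 2 := by
        simp only [expIL2]; rw [key, MemLp.norm_toLp_sq]
    _ = _ := by
        rw [← hR.norm_toLp_sq]
        refine (orthonormal_expIL2.comp k hk).norm_add_sum_smul_sq s c fun b hb => ?_
        rw [Function.comp_apply, inner_expIL2_toLp, horth b hb]

theorem memL2Circle_iff {f : ℂ → ℂ} : MemL2Circle f ↔ MemLp (onCircle f) 2 circleMeasure :=
  memLp_circleMeasure_iff.symm

theorem onCircle_pow_mul (f : ℂ → ℂ) (n : ℕ) :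
    onCircle (fun t => t ^ n * f t) = fun θ => expI n θ * onCircle f θ := by
  funext θ
  rw [onCircle, onCircle, ← cexp_mul_I_zpow, zpow_natCast]

namespace MemH2

variable {f g : ℂ → ℂ}

theorem memLp (hf : MemH2 f) : MemLp (onCircle f) 2 circleMeasure :=
  memL2Circle_iff.mp hf.1

theorem circleCoeff_eq_zero (hf : MemH2 f) {m : ℤ} (hm : m < 0) :
    circleCoeff (onCircle f) m = 0 :=
  fourierCoef_eq_circleCoeff f m ▸ hf.2 m hm

theorem of_circleCoeff (hf : MemLp (onCircle f) 2 circleMeasure)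
    (h : ∀ m : ℤ, m < 0 → circleCoeff (onCircle f) m = 0) : MemH2 f :=
  ⟨memL2Circle_iff.mpr hf, fun m hm => fourierCoef_eq_circleCoeff f m ▸ h m hm⟩

theorem sub (hf : MemH2 f) (hg : MemH2 g) : MemH2 (fun t => f t - g t) :=
  of_circleCoeff (hf.memLp.sub hg.memLp) fun m hm => by
    rw [show onCircle (fun t => f t - g t) = fun θ => onCircle f θ - onCircle g θ from rfl,
      circleCoeff_sub hf.memLp hg.memLp, hf.circleCoeff_eq_zero hm, hg.circleCoeff_eq_zero hm,
      sub_zero]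

theorem const_mul (hf : MemH2 f) (c : ℂ) : MemH2 (fun t => c * f t) :=
  of_circleCoeff (hf.memLp.const_mul c) fun m hm => by
    rw [show onCircle (fun t => c * f t) = fun θ => c * onCircle f θ from rfl,
      circleCoeff_const_mul, hf.circleCoeff_eq_zero hm, mul_zero]

theorem pow_mul (hf : MemH2 f) (n : ℕ) : MemH2 (fun t => t ^ n * f t) :=
  of_circleCoeff (onCircle_pow_mul f n ▸ hf.memLp.expI_mul n) fun m hm => by
    rw [onCircle_pow_mul, circleCoeff_expI_mul, hf.circleCoeff_eq_zero (by omega)]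

theorem finsetSum {ι : Type*} (s : Finset ι) {f : ι → ℂ → ℂ} (hf : ∀ i, MemH2 (f i)) :
    MemH2 (fun t => ∑ i ∈ s, f i t) :=
  of_circleCoeff (memLp_finsetSum s fun i _ => (hf i).memLp) fun m hm => by
    rw [show onCircle (fun t => ∑ i ∈ s, f i t) = fun θ => ∑ i ∈ s, onCircle (f i) θ from rfl,
      circleCoeff_finsetSum s fun i => (hf i).memLp]
    exact Finset.sum_eq_zero fun i _ => (hf i).circleCoeff_eq_zero hm

theorem polynomial_eval_mul (hf : MemH2 f) (P : Polynomial ℂ) :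
    MemH2 (fun t => P.eval t * f t) := by
  have h := finsetSum (Finset.range (P.natDegree + 1)) fun n =>
    (hf.pow_mul n).const_mul (P.coeff n)
  simpa only [Polynomial.eval_eq_sum_range, Finset.sum_mul, mul_assoc] using h

end MemH2

def shiftedTail (f : ℂ → ℂ) (L : ℕ) (t : ℂ) : ℂ :=
  (f t - ∑ n ∈ Finset.range L, fourierCoef f n * t ^ n) * (t ^ L)⁻¹

theorem onCircle_shiftedTail (f : ℂ → ℂ) (L : ℕ) :
    onCircle (shiftedTail f L) = fun θ =>
      expI (-L) θ * (onCircle f θ - ∑ n ∈ Finset.range L, fourierCoef f n * expI n θ) := by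
  funext θ
  simp only [onCircle, shiftedTail, ← zpow_natCast, cexp_mul_I_zpow, expI_neg]
  ring

theorem memH2_shiftedTail {f : ℂ → ℂ} (hf : MemH2 f) (L : ℕ) : MemH2 (shiftedTail f L) := by
  have hterm : ∀ n : ℕ, MemLp (fun θ => fourierCoef f n * expI n θ) 2 circleMeasure :=
    fun n => (memLp_expI 2 n).const_mul _
  have hhead := memLp_finsetSum (Finset.range L) fun n _ => hterm n
  refine MemH2.of_circleCoeff (onCircle_shiftedTail f L ▸ (hf.memLp.sub hhead).expI_mul _)
    fun m hm => ?_
  rw [onCircle_shiftedTail, circleCoeff_expI_mul, circleCoeff_sub hf.memLp hhead,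
    circleCoeff_finsetSum _ hterm]
  simp_rw [circleCoeff_const_mul, circleCoeff_expI, fourierCoef_eq_circleCoeff f]
  rcases lt_or_ge (m - -L) 0 with hneg | hnonneg
  · rw [Finset.sum_eq_zero fun n _ => by rw [if_neg (by omega), mul_zero],
      hf.circleCoeff_eq_zero hneg, sub_zero]
  · obtain ⟨k, hk⟩ := Int.eq_ofNat_of_zero_le hnonneg
    rw [hk, Finset.sum_eq_single_of_mem k (Finset.mem_range.mpr (by omega))
      fun n _ hn => by rw [if_neg (by omega), mul_zero], if_pos rfl, mul_one, sub_self]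

def predPoly (a : ℕ → ℂ) (N : ℕ) : Polynomial ℂ :=
  ∑ n ∈ Finset.range (N + 1), Polynomial.monomial n (a n)

theorem eval_predPoly (a : ℕ → ℂ) (N : ℕ) (t : ℂ) :
    (predPoly a N).eval t = ∑ n ∈ Finset.range (N + 1), a n * t ^ n := by
  simp [predPoly, Polynomial.eval_finsetSum]

theorem predPoly_coeff {P : Polynomial ℂ} {N : ℕ} (hN : P.natDegree ≤ N) :
    predPoly P.coeff N = P :=
  (P.as_sum_range' (N + 1) (Nat.lt_succ_of_le hN)).symm

theorem integral_norm_expI_mul_sub_sum_sq {κ : Type*} [Fintype κ] {g : κ → ℂ → ℂ}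
    (hg : ∀ l, MemH2 (g l)) (j : κ) (L N : ℕ) (a : ℕ → κ → ℂ) :
    ∫ θ, ‖expI (-L) θ * onCircle (g j) θ -
        ∑ n ∈ Finset.range (N + 1), ∑ l, a n l * (expI n θ * onCircle (g l) θ)‖ ^ 2
        ∂circleMeasure =
      l2NormSqCircle (fun t => shiftedTail (g j) L t - ∑ l, (predPoly (a · l) N).eval t * g l t)
        + ∑ n ∈ Finset.range L, ‖fourierCoef (g j) n‖ ^ 2 := by
  set R := fun t => shiftedTail (g j) L t - ∑ l, (predPoly (a · l) N).eval t * g l t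
  have hR : MemH2 R :=
    (memH2_shiftedTail (hg j) L).sub (MemH2.finsetSum _ fun l => (hg l).polynomial_eval_mul _)
  have hsplit : ∀ θ, expI (-L) θ * onCircle (g j) θ -
      ∑ n ∈ Finset.range (N + 1), ∑ l, a n l * (expI n θ * onCircle (g l) θ) =
      onCircle R θ + ∑ n ∈ Finset.range L, fourierCoef (g j) n * expI ((n : ℤ) - L) θ := by
    intro θ
    have hhead : ∑ n ∈ Finset.range L, fourierCoef (g j) n * expI ((n : ℤ) - L) θ =
        expI (-L) θ * ∑ n ∈ Finset.range L, fourierCoef (g j) n * expI n θ := by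
      simp_rw [Finset.mul_sum, sub_eq_add_neg, expI_add]
      exact Finset.sum_congr rfl fun n _ => by ring
    have hpoly : ∑ l, (predPoly (a · l) N).eval (cexp (θ * I)) * g l (cexp (θ * I)) =
        ∑ n ∈ Finset.range (N + 1), ∑ l, a n l * (expI n θ * onCircle (g l) θ) := by
      simp_rw [eval_predPoly, ← zpow_natCast, cexp_mul_I_zpow, Finset.sum_mul]
      rw [Finset.sum_comm]
      simp_rw [onCircle, mul_assoc]
    have hRθ : onCircle R θ = onCircle (shiftedTail (g j) L) θ -
        ∑ l, (predPoly (a · l) N).eval (cexp (θ * I)) * g l (cexp (θ * I)) := rfl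
    rw [hRθ, hpoly, onCircle_shiftedTail, hhead]
    ring
  simp_rw [hsplit]
  rw [integral_norm_add_sum_mul_expI_sq hR.memLp _ (fun m n h => by simpa using h) _
    fun n hn => hR.circleCoeff_eq_zero (by simp at hn; omega), l2NormSqCircle_eq_integral]

theorem exists_predPoly_eq {m n : Type*} [Fintype m] [Fintype n] (Q : m → n → Polynomial ℂ) :
    ∃ (N : ℕ) (A : ℕ → Matrix m n ℂ), ∀ i j, predPoly (fun k => A k i j) N = Q i j := by
  refine ⟨∑ i, ∑ j, (Q i j).natDegree, fun k => Matrix.of fun i j => (Q i j).coeff k,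
    fun i j => predPoly_coeff ?_⟩
  exact (Finset.single_le_sum (fun _ _ => Nat.zero_le _) (Finset.mem_univ j)).trans
    (Finset.single_le_sum (f := fun i => ∑ j, (Q i j).natDegree) (fun _ _ => Nat.zero_le _)
      (Finset.mem_univ i))

theorem sInf_sqrt_add_sum_eq_sqrt {ι α : Type*} [Fintype ι] [Nonempty α] {R : ℝ} (hR : 0 ≤ R)
    (D : ι → α → ℝ) (hD : ∀ i a, 0 ≤ D i a) (hinf : ∀ i, sInf {r | ∃ a, r = √(D i a)} = 0) :
    sInf {r | ∃ a : ι → α, r = √(R + ∑ i, D i (a i))} = √R := by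
  have hlow : ∀ r ∈ {r | ∃ a : ι → α, r = √(R + ∑ i, D i (a i))}, √R ≤ r := by
    rintro _ ⟨a, rfl⟩
    exact Real.sqrt_le_sqrt (le_add_of_nonneg_right (Finset.sum_nonneg fun i _ => hD i _))
  refine le_antisymm ?_ (le_csInf ⟨_, Classical.arbitrary _, rfl⟩ hlow)
  have hsmall : ∀ η > 0, ∀ i, ∃ a, D i a < η := by
    intro η hη i
    obtain ⟨_, ⟨a, rfl⟩, ha⟩ :=
      Real.lt_sInf_add_pos (s := {r | ∃ a, r = √(D i a)}) ⟨_, Classical.arbitrary α, rfl⟩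
        (Real.sqrt_pos.2 hη)
    rw [hinf, zero_add] at ha
    exact ⟨a, (Real.sqrt_lt_sqrt_iff (hD i a)).1 ha⟩
  refine le_of_forall_pos_le_add fun ε hε => ?_
  set c : ℝ := (Fintype.card ι : ℝ)
  choose a ha using hsmall (ε ^ 2 / (c + 1)) (by positivity)
  have hsum : ∑ i, D i (a i) ≤ ε ^ 2 := calc
    ∑ i, D i (a i) ≤ ∑ _i : ι, ε ^ 2 / (c + 1) := Finset.sum_le_sum fun i _ => (ha i).le
    _ = c / (c + 1) * ε ^ 2 := by simp [c]; ring
    _ ≤ ε ^ 2 := mul_le_of_le_one_left (by positivity)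
      ((div_le_one (by positivity)).2 (by linarith))
  calc sInf _ ≤ √(R + ∑ i, D i (a i)) := csInf_le ⟨√R, hlow⟩ ⟨a, rfl⟩
    _ ≤ √R + ε := by
      rw [Real.sqrt_le_left (by positivity)]
      nlinarith [Real.sq_sqrt hR, Real.sqrt_nonneg R]

section Prediction

variable {H : Type*} [NormedAddCommGroup H] [InnerProductSpace ℂ H] {d : ℕ}
  {X : ℤ → Fin d → H} {S Sp : ℂ → Matrix (Fin d) (Fin d) ℂ}

def HasSpectralDensity (X : ℤ → Fin d → H) (S : ℂ → Matrix (Fin d) (Fin d) ℂ) : Prop :=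
  ∀ (n m : ℤ) (k l : Fin d), inner ℂ (X n l) (X (n + m) k) =
    (1 / (2 * π) : ℂ) * ∫ θ in (0 : ℝ)..2 * π, cexp (-(m : ℂ) * θ * I) * S (cexp (θ * I)) k l

theorem HasSpectralDensity.inner_eq_sum_integral
    (hspec : HasSpectralDensity X S)
    (hSp : ∀ l r, MemLp (onCircle fun t => Sp t l r) 2 circleMeasure)
    (hfact : ∀ᵐ θ : ℝ ∂circleMeasure,
      S (cexp (θ * I)) = Sp (cexp (θ * I)) * (Sp (cexp (θ * I)))ᴴ)
    (p q : ℤ) (l k : Fin d) :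
    inner ℂ (X p l) (X q k) = ∑ r, ∫ θ,
      (starRingEnd ℂ) (expI (-p) θ * onCircle (fun t => Sp t l r) θ) *
        (expI (-q) θ * onCircle (fun t => Sp t k r) θ) ∂circleMeasure := by
  have h := hspec p (q - p) k l
  rw [add_sub_cancel] at h
  have hS : inner ℂ (X p l) (X q k) =
      ∫ θ, expI (p - q) θ * S (cexp (θ * I)) k l ∂circleMeasure := by
    rw [h, integral_circleMeasure, Complex.real_smul]
    congr 1
    · push_cast; ring
    · refine intervalIntegral.integral_congr fun θ _ => ?_
      simp only [expI]; push_cast; ring_nf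
  rw [hS, ← integral_finsetSum _ fun r _ => ?_]
  · refine integral_congr_ae ?_
    filter_upwards [hfact] with θ hθ
    rw [hθ, Matrix.mul_apply, Finset.mul_sum]
    refine Finset.sum_congr rfl fun r _ => ?_
    rw [Matrix.conjTranspose_apply, map_mul, conj_expI, neg_neg, sub_eq_add_neg, expI_add]
    simp only [onCircle, RCLike.star_def]
    ring
  · exact ((hSp l r).expI_mul _).star.integrable_mul ((hSp k r).expI_mul _)

theorem HasSpectralDensity.norm_predictionError_sq_eq_sum_integral
    (hspec : HasSpectralDensity X S)
    (hSp : ∀ l r, MemLp (onCircle fun t => Sp t l r) 2 circleMeasure)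
    (hfact : ∀ᵐ θ : ℝ ∂circleMeasure,
      S (cexp (θ * I)) = Sp (cexp (θ * I)) * (Sp (cexp (θ * I)))ᴴ)
    (L N : ℕ) (A : ℕ → Matrix (Fin d) (Fin d) ℂ) (j : Fin d) :
    ‖X L j - ∑ n ∈ Finset.range (N + 1), ∑ k, A n j k • X (-(n : ℤ)) k‖ ^ 2 =
      ∑ r, ∫ θ, ‖expI (-L) θ * onCircle (fun t => Sp t j r) θ -
        ∑ n ∈ Finset.range (N + 1), ∑ k, A n j k * (expI n θ * onCircle (fun t => Sp t k r) θ)‖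
          ^ 2 ∂circleMeasure := by
  have key := norm_sub_sum_smul_sq_eq_sum_integral
    (x := fun i : ℤ × Fin d => X i.1 i.2)
    (f := fun r i θ => expI (-i.1) θ * onCircle (fun t => Sp t i.2 r) θ)
    (fun r i => (hSp _ _).expI_mul _)
    (fun i i' => hspec.inner_eq_sum_integral hSp hfact _ _ _ _)
    ((L : ℤ), j) (Finset.range (N + 1) ×ˢ Finset.univ) (fun b => (-(b.1 : ℤ), b.2))
    (fun b => A b.1 j b.2)
  simpa only [Finset.sum_product, neg_neg] using key

theorem HasSpectralDensity.sum_norm_predictionError_sq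
    (hspec : HasSpectralDensity X S)
    (hSp : ∀ l r, MemH2 (fun t => Sp t l r))
    (hfact : ∀ᵐ θ : ℝ ∂circleMeasure,
      S (cexp (θ * I)) = Sp (cexp (θ * I)) * (Sp (cexp (θ * I)))ᴴ)
    (L N : ℕ) (A : ℕ → Matrix (Fin d) (Fin d) ℂ) :
    ∑ j, ‖X L j - ∑ n ∈ Finset.range (N + 1), ∑ k, A n j k • X (-(n : ℤ)) k‖ ^ 2 =
      ∑ j, ∑ k, ∑ n ∈ Finset.range L, ‖fourierCoef (fun t => Sp t j k) n‖ ^ 2 +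
        ∑ j, ∑ k, l2NormSqCircle (fun t => shiftedTail (fun t => Sp t j k) L t -
          ∑ l, (predPoly (fun n => A n j l) N).eval t * Sp t l k) := by
  rw [← Finset.sum_add_distrib]
  refine Finset.sum_congr rfl fun j _ => ?_
  rw [hspec.norm_predictionError_sq_eq_sum_integral (fun l r => (hSp l r).memLp) hfact,
    ← Finset.sum_add_distrib]
  refine Finset.sum_congr rfl fun r _ => ?_
  exact (integral_norm_expI_mul_sub_sum_sq (g := fun l t => Sp t l r) (fun l => hSp l r) j L N
    (fun n l => A n j l)).trans (add_comm _ _)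

end Prediction

end

theorem vector_prediction_error_sq_eq_sum_fourier_coeff_sq_general
    {H : Type*} [NormedAddCommGroup H] [InnerProductSpace ℂ H]
    {d : ℕ} (X : ℤ → Fin d → H) (S Sp : ℂ → Matrix (Fin d) (Fin d) ℂ)
    (hspec : ∀ (n m : ℤ) (k l : Fin d),
      (inner ℂ (X n l) (X (n + m) k) : ℂ) =
        (1 / (2 * Real.pi) : ℂ) * ∫ θ in (0:ℝ)..(2 * Real.pi),
          Complex.exp (-(m : ℂ) * θ * Complex.I) * S (Complex.exp (θ * Complex.I)) k l)
    (hSp : ∀ j k : Fin d, MemH2 (fun t => Sp t j k))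
    (hfact : ∀ᵐ θ : ℝ ∂(MeasureTheory.volume.restrict (Set.Ioc (0:ℝ) (2 * Real.pi))),
      S (Complex.exp (θ * Complex.I)) =
        Sp (Complex.exp (θ * Complex.I)) * (Sp (Complex.exp (θ * Complex.I)))ᴴ)
    (hdense : ∀ g : Fin d → (ℂ → ℂ), (∀ k : Fin d, MemH2 (g k)) →
      sInf {r : ℝ | ∃ Q : Fin d → Polynomial ℂ,
        r = Real.sqrt (∑ k : Fin d,
          l2NormSqCircle (fun t => g k t - ∑ l : Fin d, (Q l).eval t * Sp t l k))} = 0)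
    (L : ℕ) :
    (sInf {r : ℝ | ∃ (N : ℕ) (A : ℕ → Matrix (Fin d) (Fin d) ℂ),
        r = Real.sqrt (∑ j : Fin d, ‖X (L : ℤ) j -
          ∑ n ∈ Finset.range (N + 1), ∑ k : Fin d, A n j k • X (-(n : ℤ)) k‖ ^ 2)}) ^ 2 =
      ∑ j : Fin d, ∑ k : Fin d, ∑ n ∈ Finset.range L,
        ‖fourierCoef (fun t => Sp t j k) n‖ ^ 2 := by
  have herr := HasSpectralDensity.sum_norm_predictionError_sq hspec hSp
    (Measure.ae_smul_measure hfact _) L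
  set B := ∑ j : Fin d, ∑ k : Fin d, ∑ n ∈ Finset.range L, ‖fourierCoef (fun t => Sp t j k) n‖ ^ 2
  have hB : 0 ≤ B := by positivity
  let D (j : Fin d) (Q : Fin d → Polynomial ℂ) : ℝ := ∑ k, l2NormSqCircle (fun t =>
    shiftedTail (fun t => Sp t j k) L t - ∑ l, (Q l).eval t * Sp t l k)
  rw [← Real.sq_sqrt hB, ← sInf_sqrt_add_sum_eq_sqrt hB D
    (fun j Q => Finset.sum_nonneg fun k _ => l2NormSqCircle_nonneg _)
    (fun j => hdense _ fun k => memH2_shiftedTail (hSp j k) L)]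
  congr 2
  ext r
  constructor
  · rintro ⟨N, A, rfl⟩
    exact ⟨fun j l => predPoly (fun n => A n j l) N, by rw [herr]⟩
  · rintro ⟨Q, rfl⟩
    obtain ⟨N, A, hA⟩ := exists_predPoly_eq Q
    exact ⟨N, A, by simp only [herr, hA, D]⟩

/-- Let `X : ℤ → Fin d → H` be a `d`-dimensional stationary process
with spectral density matrix `S` (integrable entries, and the `(k,l)` entry of
`[X (n+m), (X n)ᵀ]`, i.e. the paper-convention inner product
`⟨x_{n+m}⁽ᵏ⁾, x_n⁽ˡ⁾⟩ = inner (X n l) (X (n+m) k)` in Mathlib, equals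
`(1/2π) ∫₀^{2π} e^{−imθ} S(e^{iθ})_{kl} dθ`). If `S = S₊ S₊*` a.e. on `𝕋` with all
entries of `S₊` in `H²` and `{Q S₊}` dense in `(H²)^{1×d}`, then for every `L ≥ 1`,
`(e_X^{L})² = ∑_j ∑_k ∑_{n=0}^{L−1} |c_n{S₊^{(jk)}}|²`. -/
theorem vector_prediction_error_sq_eq_sum_fourier_coeff_sq
    {H : Type*} [NormedAddCommGroup H] [InnerProductSpace ℂ H] [CompleteSpace H]
    {d : ℕ} (X : ℤ → Fin d → H) (S Sp : ℂ → Matrix (Fin d) (Fin d) ℂ)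
    (hS_int : ∀ k l : Fin d, IntervalIntegrable
      (fun θ : ℝ => S (Complex.exp (θ * Complex.I)) k l) volume 0 (2 * Real.pi))
    (hspec : ∀ (n m : ℤ) (k l : Fin d),
      (inner ℂ (X n l) (X (n + m) k) : ℂ) =
        (1 / (2 * Real.pi) : ℂ) * ∫ θ in (0:ℝ)..(2 * Real.pi),
          Complex.exp (-(m : ℂ) * θ * Complex.I) * S (Complex.exp (θ * Complex.I)) k l)
    (hSp : ∀ j k : Fin d, MemH2 (fun t => Sp t j k))
    (hfact : ∀ᵐ θ : ℝ ∂(MeasureTheory.volume.restrict (Set.Ioc (0:ℝ) (2 * Real.pi))),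
      S (Complex.exp (θ * Complex.I)) =
        Sp (Complex.exp (θ * Complex.I)) * (Sp (Complex.exp (θ * Complex.I)))ᴴ)
    (hdense : ∀ g : Fin d → (ℂ → ℂ), (∀ k : Fin d, MemH2 (g k)) →
      sInf {r : ℝ | ∃ Q : Fin d → Polynomial ℂ,
        r = Real.sqrt (∑ k : Fin d,
          l2NormSqCircle (fun t => g k t - ∑ l : Fin d, (Q l).eval t * Sp t l k))} = 0)
    (L : ℕ) (hL : 1 ≤ L) :
    (sInf {r : ℝ | ∃ (N : ℕ) (A : ℕ → Matrix (Fin d) (Fin d) ℂ),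
        r = Real.sqrt (∑ j : Fin d, ‖X (L : ℤ) j -
          ∑ n ∈ Finset.range (N + 1), ∑ k : Fin d, A n j k • X (-(n : ℤ)) k‖ ^ 2)}) ^ 2 =
      ∑ j : Fin d, ∑ k : Fin d, ∑ n ∈ Finset.range L,
        ‖fourierCoef (fun t => Sp t j k) n‖ ^ 2 :=
  vector_prediction_error_sq_eq_sum_fourier_coeff_sq_general X S Sp hspec hSp hfact hdense L
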